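/- Let X = (X_k) ∈ {0,1}^ℕ be drawn from the balanced Bernoulli measure and set a_X(n) = ∑_{k=0}^{n} X_k 2^k. Then almost surely Var(μ_{a_X(n)}) / n → 1/2 as n → ∞, where Var(μ_a) = ∑_{d∈ℤ} d² μ_a(d). -/

import Mathlib

/-!
Splitting `m` by parity gives `μ_{2a} = μ_a` and `μ_{2a+1} = (μ_a(· - 1) + μ_{a+1}(· + 1)) / 2`;
by induction every `μ_a` is a centred probability distribution with finite variance, so
`V a = Var μ_a` satisfies `V (2a) = V a` and `V (2a + 1) = (V a + V (a + 1)) / 2 + 1`.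
Unwinding this recursion along the binary digits `x_k` of `a_n`, with signs `b_k = 2 x_k - 1`,
gives `V(a_n) = n/2 + ∑_{j<n} b_j r_j + O(1)`, where `r_j = 2^{-j-1} - ∑_{i<j} 2^{-i-2} b_{j-i-1}`.
Hence `V(a_n)/n - 1/2` is, up to `O(1/n)`, a geometrically weighted combination of the empirical
autocorrelations `n⁻¹ ∑_m b_{m+k} b_m`, `k ≥ 1`. For independent fair bits each of these tends to
`0` almost surely by the strong law of large numbers, applied on the residue classes mod `2k`
where the products are independent; dominated convergence concludes.
-/

open Filter Finset MeasureTheory ProbabilityTheory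

/-- `s₂ n` is the number of 1's in the binary expansion of `n`. -/
def s2 (n : ℕ) : ℕ := (Nat.digits 2 n).sum

/-- The counting sequence whose limit is the asymptotic density
`μ_a(d)` of `{m : s₂(m+a) - s₂(m) = d}`. -/
noncomputable def densSeq (a : ℕ) (d : ℤ) (N : ℕ) : ℝ :=
  (((Finset.range N).filter fun n => (s2 (n + a) : ℤ) - s2 n = d).card : ℝ) / N

/-- The variance of `μ_a`. -/
noncomputable def var (μ : ℕ → ℤ → ℝ) (a : ℕ) : ℝ := ∑' d : ℤ, (d : ℝ) ^ 2 * μ a d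

lemma sum_range_mul_eq_sum_range_sum {M : Type*} [AddCommMonoid M] (f : ℕ → M) (k n : ℕ) :
    ∑ m ∈ range (k * n), f m = ∑ t ∈ range n, ∑ r ∈ range k, f (k * t + r) := by
  induction n with
  | zero => simp
  | succ n ih => rw [Nat.mul_succ, sum_range_add, ih, sum_range_succ]

lemma abs_sum_range_le {Z : ℕ → ℝ} (hZ : ∀ m, |Z m| ≤ 1) (M : ℕ) : |∑ m ∈ range M, Z m| ≤ M :=
  (abs_sum_le_sum_abs _ _).trans <| (sum_le_sum fun m _ => hZ m).trans_eq (by simp)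

lemma tendsto_div_natCast_of_abs_le {u : ℕ → ℝ} {C : ℝ} (h : ∀ N, |u N| ≤ C) :
    Tendsto (fun N : ℕ => u N / N) atTop (nhds 0) := by
  refine squeeze_zero_norm (fun N => ?_) (tendsto_const_div_atTop_nhds_zero_nat C)
  rw [norm_div, Real.norm_natCast]
  exact div_le_div_of_nonneg_right (h N) N.cast_nonneg

lemma tendsto_comp_div_of_le {u : ℕ → ℝ} {g : ℕ → ℕ}
    (hu : Tendsto (fun M : ℕ => u M / M) atTop (nhds 0)) (hg : Tendsto g atTop atTop)
    (hgN : ∀ N, g N ≤ N) : Tendsto (fun N : ℕ => u (g N) / N) atTop (nhds 0) := by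
  rw [tendsto_zero_iff_abs_tendsto_zero] at hu ⊢
  refine squeeze_zero' (.of_forall fun N => abs_nonneg _) ?_ (hu.comp hg)
  filter_upwards [hg.eventually_gt_atTop 0] with N hN
  simp only [Function.comp_apply, abs_div, Nat.abs_cast]
  exact div_le_div_of_nonneg_left (abs_nonneg _) (by exact_mod_cast hN) (by exact_mod_cast hgN N)

lemma tendsto_succ_div {u : ℕ → ℝ} {L : ℝ} (hu : Tendsto (fun N : ℕ => u N / N) atTop (nhds L)) :
    Tendsto (fun n : ℕ => u (n + 1) / n) atTop (nhds L) := by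
  have hratio : Tendsto (fun n : ℕ => ((n : ℝ) + 1) / n) atTop (nhds 1) := by
    simpa using (tendsto_natCast_div_add_atTop (1 : ℝ)).inv₀ one_ne_zero
  convert ((tendsto_add_atTop_iff_nat 1).2 hu).mul hratio using 1
  · funext n
    rcases n.eq_zero_or_pos with rfl | hn
    · simp
    · push_cast
      field_simp
  · rw [mul_one]

lemma tendsto_sum_div_of_residues {Z : ℕ → ℝ} (hZ : ∀ m, |Z m| ≤ 1) {k : ℕ} (hk : 0 < k)
    (h : ∀ r < k, Tendsto (fun M : ℕ => (∑ t ∈ range M, Z (k * t + r)) / M) atTop (nhds 0)) :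
    Tendsto (fun n : ℕ => (∑ m ∈ range n, Z m) / n) atTop (nhds 0) := by
  have hblocks : Tendsto (fun M : ℕ => (∑ m ∈ range (k * M), Z m) / M) atTop (nhds 0) := by
    have hsum := tendsto_finsetSum (range k) fun r hr => h r (mem_range.1 hr)
    rw [sum_const_zero] at hsum
    refine hsum.congr fun M => ?_
    rw [sum_range_mul_eq_sum_range_sum, sum_comm, sum_div]
  have hsplit : ∀ n, ∑ m ∈ range n, Z m
      = ∑ m ∈ range (k * (n / k)), Z m + ∑ j ∈ range (n % k), Z (k * (n / k) + j) := fun n => by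
    rw [← sum_range_add, Nat.div_add_mod]
  have htail : ∀ n, |∑ j ∈ range (n % k), Z (k * (n / k) + j)| ≤ k := fun n =>
    (abs_sum_range_le (fun j => hZ _) _).trans (by exact_mod_cast (Nat.mod_lt n hk).le)
  have hlim := (tendsto_comp_div_of_le hblocks (Nat.tendsto_div_const_atTop hk.ne')
    fun n => Nat.div_le_self n k).add (tendsto_div_natCast_of_abs_le htail)
  rw [add_zero] at hlim
  refine hlim.congr fun n => ?_
  rw [hsplit n, add_div]

lemma s2_two_mul (m : ℕ) : s2 (2 * m) = s2 m := by
  rcases Nat.eq_zero_or_pos m with rfl | hm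
  · rfl
  rw [s2, Nat.digits_def' one_lt_two (by omega)]
  simp [s2]

lemma s2_two_mul_add_one (m : ℕ) : s2 (2 * m + 1) = s2 m + 1 := by
  rw [s2, Nat.digits_def' one_lt_two (by omega), show (2 * m + 1) % 2 = 1 by omega,
    show (2 * m + 1) / 2 = m by omega, List.sum_cons, s2, add_comm]

def s2DiffCount (a : ℕ) (d : ℤ) (N : ℕ) : ℕ := #{n ∈ range N | (s2 (n + a) : ℤ) - s2 n = d}

lemma s2DiffCount_two_mul (a : ℕ) (d : ℤ) (N : ℕ) :
    s2DiffCount (2 * a) d (2 * N) = 2 * s2DiffCount a d N := by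
  simp only [s2DiffCount, card_filter, sum_range_mul_eq_sum_range_sum, mul_sum, sum_range_succ,
    sum_range_zero, zero_add, add_zero]
  refine sum_congr rfl fun m _ => ?_
  rw [show 2 * m + 2 * a = 2 * (m + a) by ring, show 2 * m + 1 + 2 * a = 2 * (m + a) + 1 by ring]
  simp only [s2_two_mul, s2_two_mul_add_one, Nat.cast_add, Nat.cast_one, add_sub_add_right_eq_sub]
  split_ifs <;> rfl

lemma s2DiffCount_two_mul_add_one (a : ℕ) (d : ℤ) (N : ℕ) :
    s2DiffCount (2 * a + 1) d (2 * N)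
      = s2DiffCount a (d - 1) N + s2DiffCount (a + 1) (d + 1) N := by
  simp only [s2DiffCount, card_filter, sum_range_mul_eq_sum_range_sum, ← sum_add_distrib,
    sum_range_succ, sum_range_zero, zero_add, add_zero]
  refine sum_congr rfl fun m _ => ?_
  rw [show 2 * m + (2 * a + 1) = 2 * (m + a) + 1 by ring,
    show 2 * m + 1 + (2 * a + 1) = 2 * (m + (a + 1)) by ring]
  simp only [s2_two_mul, s2_two_mul_add_one, Nat.cast_add, Nat.cast_one]
  congr 2 <;> apply propext <;> omega

lemma densSeq_eq (a : ℕ) (d : ℤ) (N : ℕ) : densSeq a d N = s2DiffCount a d N / N := rfl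

lemma densSeq_two_mul (a : ℕ) (d : ℤ) (N : ℕ) : densSeq (2 * a) d (2 * N) = densSeq a d N := by
  rw [densSeq_eq, densSeq_eq, s2DiffCount_two_mul]
  push_cast
  exact mul_div_mul_left _ _ two_ne_zero

lemma densSeq_two_mul_add_one (a : ℕ) (d : ℤ) (N : ℕ) :
    densSeq (2 * a + 1) d (2 * N) = (densSeq a (d - 1) N + densSeq (a + 1) (d + 1) N) / 2 := by
  rw [densSeq_eq, densSeq_eq, densSeq_eq, s2DiffCount_two_mul_add_one]
  push_cast
  rw [← add_div, div_div, mul_comm]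

lemma densSeq_zero (d : ℤ) {N : ℕ} (hN : N ≠ 0) : densSeq 0 d N = if d = 0 then 1 else 0 := by
  rw [densSeq_eq, s2DiffCount]
  split_ifs with hd
  · simp [hd, hN]
  · simp [Ne.symm hd]

structure IsDigitDensity (μ : ℕ → ℤ → ℝ) : Prop where
  nonneg : ∀ a d, 0 ≤ μ a d
  le_one : ∀ a d, μ a d ≤ 1
  zero : ∀ d, μ 0 d = if d = 0 then 1 else 0
  two_mul : ∀ a d, μ (2 * a) d = μ a d
  two_mul_add_one : ∀ a d, μ (2 * a + 1) d = (μ a (d - 1) + μ (a + 1) (d + 1)) / 2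

lemma isDigitDensity_of_tendsto {μ : ℕ → ℤ → ℝ}
    (hμ : ∀ a d, Tendsto (densSeq a d) atTop (nhds (μ a d))) : IsDigitDensity μ where
  nonneg a d := ge_of_tendsto' (hμ a d) fun N => by rw [densSeq_eq]; positivity
  le_one a d := le_of_tendsto' (hμ a d) fun N => div_le_one_of_le₀
    (mod_cast card_filter_le _ _ |>.trans (card_range N).le) N.cast_nonneg
  zero d := tendsto_nhds_unique (hμ 0 d) <| tendsto_const_nhds.congr' <|
    (eventually_ne_atTop 0).mono fun N hN => (densSeq_zero d hN).symm
  two_mul a d := by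
    have h2 : Tendsto (fun N : ℕ => 2 * N) atTop atTop := tendsto_id.const_mul_atTop' two_pos
    refine tendsto_nhds_unique ((hμ (2 * a) d).comp h2) ?_
    simpa only [Function.comp_def, densSeq_two_mul] using hμ a d
  two_mul_add_one a d := by
    have h2 : Tendsto (fun N : ℕ => 2 * N) atTop atTop := tendsto_id.const_mul_atTop' two_pos
    refine tendsto_nhds_unique ((hμ (2 * a + 1) d).comp h2) ?_
    simpa only [Function.comp_def, densSeq_two_mul_add_one] using
      ((hμ a (d - 1)).add (hμ (a + 1) (d + 1))).div_const 2

structure IsCentered (p : ℤ → ℝ) : Prop where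
  hasSum : HasSum p 1
  hasSum_mul : HasSum (fun d : ℤ => (d : ℝ) * p d) 0
  summable_sq : Summable fun d : ℤ => (d : ℝ) ^ 2 * p d

namespace IsCentered

variable {p : ℤ → ℝ}

lemma hasSum_add_mul (hp : IsCentered p) (c : ℝ) :
    HasSum (fun d : ℤ => ((d : ℝ) + c) * p d) c := by
  convert hp.hasSum_mul.add (hp.hasSum.mul_left c) using 1
  · ext d; ring
  · ring

lemma hasSum_add_sq (hp : IsCentered p) (c : ℝ) :
    HasSum (fun d : ℤ => ((d : ℝ) + c) ^ 2 * p d) (∑' d : ℤ, (d : ℝ) ^ 2 * p d + c ^ 2) := by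
  convert hp.summable_sq.hasSum.add ((hp.hasSum_mul.mul_left (2 * c)).add
    (hp.hasSum.mul_left (c ^ 2))) using 1
  · ext d; ring
  · ring

end IsCentered

namespace IsDigitDensity

variable {μ : ℕ → ℤ → ℝ} (hμ : IsDigitDensity μ)
include hμ

lemma one_eq_half_succ {d : ℤ} (hd : d ≠ 1) : μ 1 d = μ 1 (d + 1) / 2 := by
  simpa [hμ.zero, sub_eq_zero, hd] using hμ.two_mul_add_one 0 d

lemma one_eq_zero {d : ℤ} (hd : 2 ≤ d) : μ 1 d = 0 := by
  have hK : ∀ K : ℕ, μ 1 d = μ 1 (d + K) * (1 / 2) ^ K := by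
    intro K
    induction K with
    | zero => simp
    | succ K ih =>
      rw [ih, hμ.one_eq_half_succ (d := d + K) (by omega)]
      push_cast
      ring_nf
  have hlim : Tendsto (fun K : ℕ => (1 / 2 : ℝ) ^ K) atTop (nhds 0) :=
    tendsto_pow_atTop_nhds_zero_of_lt_one (by norm_num) (by norm_num)
  refine le_antisymm (ge_of_tendsto' hlim fun K => ?_) (hμ.nonneg 1 d)
  exact (hK K).le.trans (mul_le_of_le_one_left (by positivity) (hμ.le_one 1 _))

lemma one_neg (k : ℕ) : μ 1 (-k) = (1 / 2) ^ (k + 2) := by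
  induction k with
  | zero =>
    have h1 : μ 1 1 = 1 / 2 := by
      simpa [hμ.zero, hμ.one_eq_zero (d := 2) le_rfl] using hμ.two_mul_add_one 0 1
    rw [Nat.cast_zero, neg_zero, hμ.one_eq_half_succ (by norm_num), zero_add, h1]
    norm_num
  | succ k ih =>
    rw [hμ.one_eq_half_succ (by omega), show -((k + 1 : ℕ) : ℤ) + 1 = -k by push_cast; ring, ih]
    ring

lemma summable_pow_mul_one (n : ℕ) : Summable fun d : ℤ => (d : ℝ) ^ n * μ 1 d := by
  refine Summable.of_nat_of_neg ?_ ?_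
  · refine summable_of_ne_finset_zero (s := range 2) fun k hk => ?_
    rw [hμ.one_eq_zero (by simp at hk; omega), mul_zero]
  · refine (summable_pow_mul_geometric_of_norm_lt_one n (r := (1 / 2 : ℝ))
      (by norm_num)).of_norm_bounded fun k => ?_
    rw [hμ.one_neg, norm_mul, norm_pow, Int.cast_neg, norm_neg, Int.cast_natCast,
      Real.norm_natCast, Real.norm_of_nonneg (by positivity)]
    exact mul_le_mul_of_nonneg_left (pow_le_pow_of_le_one (by norm_num) (by norm_num) (by omega))
      (by positivity)

lemma hasSum_two_mul_add_one {g : ℝ → ℝ} {b : ℕ} {A B : ℝ}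
    (hA : HasSum (fun d : ℤ => g (d + 1) * μ b d) A)
    (hB : HasSum (fun d : ℤ => g (d - 1) * μ (b + 1) d) B) :
    HasSum (fun d : ℤ => g d * μ (2 * b + 1) d) ((A + B) / 2) := by
  have hA' : HasSum (fun d : ℤ => g d * μ b (d - 1)) A :=
    (Equiv.addRight (1 : ℤ)).hasSum_iff.mp (by simpa [Function.comp_def] using hA)
  have hB' : HasSum (fun d : ℤ => g d * μ (b + 1) (d + 1)) B :=
    (Equiv.subRight (1 : ℤ)).hasSum_iff.mp (by simpa [Function.comp_def] using hB)
  have hμ' : (fun d : ℤ => g d * μ (2 * b + 1) d)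
      = fun d : ℤ => (g d * μ b (d - 1) + g d * μ (b + 1) (d + 1)) / 2 := by
    funext d
    rw [hμ.two_mul_add_one]
    ring
  rw [hμ']
  exact (hA'.add hB').div_const 2

lemma isCentered_zero : IsCentered (μ 0) where
  hasSum := by simpa only [← hμ.zero] using hasSum_ite_eq (0 : ℤ) (1 : ℝ)
  hasSum_mul := by
    convert hasSum_zero (α := ℝ) using 1
    funext d
    rw [hμ.zero]
    split_ifs with h <;> simp [h]
  summable_sq := by
    convert summable_zero (α := ℝ) using 1
    funext d
    rw [hμ.zero]
    split_ifs with h <;> simp [h]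

lemma isCentered_one : IsCentered (μ 1) := by
  have hS := (hμ.summable_pow_mul_one 0).hasSum
  have hM := (hμ.summable_pow_mul_one 1).hasSum
  simp only [pow_zero, one_mul, pow_one] at hS hM
  -- mass `S` and mean `m` of `μ 1` solve `S = (1 + S) / 2` and `m = (1 + (m - S)) / 2`
  have hmass : ∑' d, μ 1 d = 1 := by
    have hrec := hμ.hasSum_two_mul_add_one (g := fun _ => 1) (b := 0)
      (by simpa using hμ.isCentered_zero.hasSum) (by simpa using hS)
    linarith [hS.unique (by simpa using hrec)]
  rw [hmass] at hS
  have hmean : ∑' d : ℤ, (d : ℝ) * μ 1 d = 0 := by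
    have hrec := hμ.hasSum_two_mul_add_one (g := id) (b := 0)
      (hμ.isCentered_zero.hasSum_add_mul 1) (by simpa [sub_mul] using hM.sub hS)
    linarith [hM.unique (by simpa using hrec)]
  exact ⟨hS, hmean ▸ hM, by simpa using hμ.summable_pow_mul_one 2⟩

lemma isCentered_two_mul_add_one {b : ℕ} (hb : IsCentered (μ b)) (hb' : IsCentered (μ (b + 1))) :
    IsCentered (μ (2 * b + 1)) where
  hasSum := by
    convert hμ.hasSum_two_mul_add_one (g := fun _ => 1) (by simpa using hb.hasSum)
      (by simpa using hb'.hasSum) using 1 <;> simp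
  hasSum_mul := by
    convert hμ.hasSum_two_mul_add_one (g := id) (hb.hasSum_add_mul 1)
      (by simpa [sub_eq_add_neg] using hb'.hasSum_add_mul (-1)) using 1 <;> simp
  summable_sq := (hμ.hasSum_two_mul_add_one (g := (· ^ 2)) (hb.hasSum_add_sq 1)
      (by simpa [sub_eq_add_neg] using hb'.hasSum_add_sq (-1))).summable

theorem isCentered (a : ℕ) : IsCentered (μ a) := by
  induction a using Nat.strong_induction_on with
  | _ a ih =>
    obtain ⟨b, rfl | rfl⟩ := Nat.even_or_odd' a
    · rcases b.eq_zero_or_pos with rfl | hb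
      · exact hμ.isCentered_zero
      · rw [show μ (2 * b) = μ b from funext (hμ.two_mul b)]
        exact ih b (by omega)
    · rcases b.eq_zero_or_pos with rfl | hb
      · exact hμ.isCentered_one
      · exact hμ.isCentered_two_mul_add_one (ih b (by omega)) (ih (b + 1) (by omega))

lemma var_zero : var μ 0 = 0 := by
  simp [var, hμ.zero]

lemma var_two_mul (b : ℕ) : var μ (2 * b) = var μ b := by
  simp [var, hμ.two_mul]

lemma var_two_mul_add_one (b : ℕ) : var μ (2 * b + 1) = (var μ b + var μ (b + 1)) / 2 + 1 := by
  have := hμ.hasSum_two_mul_add_one (g := (· ^ 2)) ((hμ.isCentered b).hasSum_add_sq 1)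
    (by simpa [sub_eq_add_neg] using (hμ.isCentered (b + 1)).hasSum_add_sq (-1))
  rw [var, this.tsum_eq, var, var]
  ring

end IsDigitDensity

/-- For the digit signs `b k = 2 x k - 1`, the weights of `V m` and `V (m + 1)` in
`V (∑_{k<n} x k 2^k + 2^n m)` are `1/2 + digitBias b n` and `1/2 - digitBias b n`. -/
noncomputable def digitBias (b : ℕ → ℝ) : ℕ → ℝ
  | 0 => 1 / 2
  | j + 1 => digitBias b j / 2 - b j / 4

lemma apply_sum_digits_add {V : ℕ → ℝ} (heven : ∀ b, V (2 * b) = V b)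
    (hodd : ∀ b, V (2 * b + 1) = (V b + V (b + 1)) / 2 + 1)
    {x : ℕ → ℕ} (hx : ∀ k, x k = 0 ∨ x k = 1) (n m : ℕ) :
    V (∑ k ∈ range n, x k * 2 ^ k + 2 ^ n * m)
      = ∑ j ∈ range n, (1 / 2 + (2 * (x j : ℝ) - 1) * digitBias (fun k => 2 * (x k : ℝ) - 1) j)
        + (1 / 2 + digitBias (fun k => 2 * (x k : ℝ) - 1) n) * V m
        + (1 / 2 - digitBias (fun k => 2 * (x k : ℝ) - 1) n) * V (m + 1) := by
  induction n generalizing m with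
  | zero => norm_num [digitBias]
  | succ n ih =>
    have hsplit : ∑ k ∈ range (n + 1), x k * 2 ^ k + 2 ^ (n + 1) * m
        = ∑ k ∈ range n, x k * 2 ^ k + 2 ^ n * (x n + 2 * m) := by
      rw [sum_range_succ, pow_succ]
      ring
    rw [hsplit, ih, sum_range_succ, digitBias]
    rcases hx n with h | h <;> simp only [h]
    · rw [zero_add, heven, hodd]
      push_cast
      ring
    · rw [add_comm 1, hodd, show 2 * m + 1 + 1 = 2 * (m + 1) by ring, heven]
      push_cast
      ring

lemma abs_digitBias_le {b : ℕ → ℝ} (hb : ∀ j, |b j| ≤ 1) (j : ℕ) : |digitBias b j| ≤ 1 / 2 := by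
  induction j with
  | zero => norm_num [digitBias]
  | succ j ih =>
    rw [digitBias, abs_le]
    constructor <;> linarith [abs_le.1 ih, abs_le.1 (hb j)]

lemma digitBias_eq (b : ℕ → ℝ) (j : ℕ) :
    digitBias b j = (1 / 2) ^ (j + 1) - ∑ i ∈ range j, (1 / 2) ^ (i + 2) * b (j - (i + 1)) := by
  induction j with
  | zero => norm_num [digitBias]
  | succ j ih =>
    have hshift : ∑ i ∈ range j, (1 / 2 : ℝ) ^ (i + 1 + 2) * b (j + 1 - (i + 1 + 1))
        = (∑ i ∈ range j, (1 / 2) ^ (i + 2) * b (j - (i + 1))) / 2 := by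
      rw [sum_div]
      exact sum_congr rfl fun i _ => by rw [Nat.add_sub_add_right]; ring
    rw [digitBias, ih, sum_range_succ', hshift, Nat.add_sub_cancel]
    ring

lemma sum_mul_digitBias (b : ℕ → ℝ) (N : ℕ) :
    ∑ j ∈ range N, b j * digitBias b j
      = ∑ j ∈ range N, (1 / 2) ^ (j + 1) * b j
        - ∑ i ∈ range N, (1 / 2) ^ (i + 2) * ∑ m ∈ range (N - (i + 1)), b (m + (i + 1)) * b m := by
  have hswap := sum_Ico_Ico_comm' 0 N fun i j => b j * ((1 / 2 : ℝ) ^ (i + 2) * b (j - (i + 1)))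
  simp only [← range_eq_Ico] at hswap
  simp only [digitBias_eq, mul_sub, mul_sum, sum_sub_distrib]
  congr 1
  · exact sum_congr rfl fun j _ => mul_comm _ _
  · rw [← hswap]
    refine sum_congr rfl fun i _ => ?_
    rw [sum_Ico_eq_sum_range]
    refine sum_congr rfl fun m _ => ?_
    rw [add_comm (i + 1) m, Nat.add_sub_cancel]
    ring

lemma abs_sum_pow_mul_le {b : ℕ → ℝ} (hb : ∀ j, |b j| ≤ 1) (N : ℕ) :
    |∑ j ∈ range N, (1 / 2 : ℝ) ^ (j + 1) * b j| ≤ 1 := by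
  calc |∑ j ∈ range N, (1 / 2 : ℝ) ^ (j + 1) * b j|
      ≤ ∑ j ∈ range N, (1 / 2 : ℝ) ^ (j + 1) := (abs_sum_le_sum_abs _ _).trans <|
        sum_le_sum fun j _ => by
          rw [abs_mul, abs_of_pos (by positivity)]
          exact mul_le_of_le_one_right (by positivity) (hb j)
    _ = (∑ j ∈ range N, (1 / 2 : ℝ) ^ j) / 2 := by rw [sum_div]; simp [pow_succ, div_eq_mul_inv]
    _ ≤ 1 := by linarith [sum_geometric_two_le N]

lemma tendsto_sum_pow_mul_autocorrelation_div {b : ℕ → ℝ} (hb : ∀ j, |b j| ≤ 1)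
    (hcorr : ∀ k, 0 < k → Tendsto (fun M : ℕ => (∑ m ∈ range M, b (m + k) * b m) / M) atTop
      (nhds 0)) :
    Tendsto (fun N : ℕ => (∑ i ∈ range N, (1 / 2 : ℝ) ^ (i + 2)
      * ∑ m ∈ range (N - (i + 1)), b (m + (i + 1)) * b m) / N) atTop (nhds 0) := by
  set c : ℕ → ℕ → ℝ := fun N i => (∑ m ∈ range (N - (i + 1)), b (m + (i + 1)) * b m) / N
  have hprod : ∀ k m, |b (m + k) * b m| ≤ 1 := fun k m => by
    rw [abs_mul]; exact mul_le_one₀ (hb _) (abs_nonneg _) (hb _)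
  have hc_le : ∀ N i, ‖(1 / 2 : ℝ) ^ (i + 2) * c N i‖ ≤ (1 / 2) ^ (i + 2) := fun N i => by
    rw [norm_mul, Real.norm_of_nonneg (by positivity), Real.norm_eq_abs, abs_div, Nat.abs_cast]
    refine mul_le_of_le_one_right (by positivity) (div_le_one_of_le₀ ?_ N.cast_nonneg)
    exact (abs_sum_range_le (hprod _) _).trans (by exact_mod_cast N.sub_le _)
  have hc_lim : ∀ i, Tendsto (fun N => (1 / 2 : ℝ) ^ (i + 2) * c N i) atTop (nhds 0) := fun i => by
    simpa using ((tendsto_comp_div_of_le (hcorr _ i.succ_pos) (tendsto_sub_atTop_nat _)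
      fun N => N.sub_le _).const_mul ((1 / 2 : ℝ) ^ (i + 2)))
  have hsum : ∀ N : ℕ, (∑ i ∈ range N, (1 / 2 : ℝ) ^ (i + 2)
      * ∑ m ∈ range (N - (i + 1)), b (m + (i + 1)) * b m) / N
        = ∑' i, (1 / 2 : ℝ) ^ (i + 2) * c N i := fun N => by
    rw [sum_div, tsum_eq_sum fun i hi => ?_]
    · exact sum_congr rfl fun i _ => mul_div_assoc _ _ _
    · simp [c, Nat.sub_eq_zero_of_le (by simp at hi; omega : N ≤ i + 1)]
  simp_rw [hsum]
  simpa using tendsto_tsum_of_dominated_convergence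
    ((summable_nat_add_iff 2).2 summable_geometric_two) hc_lim (.of_forall hc_le)

theorem tendsto_apply_sum_digits_div {V : ℕ → ℝ} (hV0 : V 0 = 0) (heven : ∀ b, V (2 * b) = V b)
    (hodd : ∀ b, V (2 * b + 1) = (V b + V (b + 1)) / 2 + 1)
    {x : ℕ → ℕ} (hx : ∀ k, x k = 0 ∨ x k = 1)
    (hcorr : ∀ k, 0 < k → Tendsto (fun M : ℕ =>
      (∑ m ∈ range M, (2 * (x (m + k) : ℝ) - 1) * (2 * x m - 1)) / M) atTop (nhds 0)) :
    Tendsto (fun N : ℕ => V (∑ k ∈ range N, x k * 2 ^ k) / N) atTop (nhds (1 / 2)) := by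
  set b : ℕ → ℝ := fun k => 2 * (x k : ℝ) - 1
  have hb : ∀ j, |b j| ≤ 1 := fun j => by rcases hx j with h | h <;> norm_num [b, h]
  have hV1 : V 1 = 2 := by linarith [hodd 0, hV0]
  set R : ℕ → ℝ := fun N => ∑ j ∈ range N, (1 / 2) ^ (j + 1) * b j + 1 - 2 * digitBias b N
  have hR : ∀ N, |R N| ≤ 3 := fun N => by
    have h1 := abs_sum_pow_mul_le hb N
    have h2 := abs_digitBias_le hb N
    rw [abs_le] at h1 h2 ⊢
    constructor <;> linarith
  have hV : ∀ N : ℕ, V (∑ k ∈ range N, x k * 2 ^ k) / N = (N / 2 : ℝ) / N + R N / N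
      - (∑ i ∈ range N, (1 / 2 : ℝ) ^ (i + 2)
          * ∑ m ∈ range (N - (i + 1)), b (m + (i + 1)) * b m) / N := fun N => by
    have h := apply_sum_digits_add heven hodd hx N 0
    rw [mul_zero, add_zero, hV0, zero_add, hV1, sum_add_distrib, sum_const, card_range,
      nsmul_eq_mul, sum_mul_digitBias] at h
    rw [h, ← add_div, ← sub_div]
    ring
  have hhalf : Tendsto (fun N : ℕ => (N / 2 : ℝ) / N) atTop (nhds (1 / 2)) :=
    tendsto_const_nhds.congr' <| (eventually_ne_atTop 0).mono fun N hN => by field_simp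
  simpa [hV] using (hhalf.add (tendsto_div_natCast_of_abs_le hR)).sub
    (tendsto_sum_pow_mul_autocorrelation_div hb hcorr)

section Autocorrelation

variable {Ω : Type*} [MeasurableSpace Ω] {P : Measure Ω} [IsProbabilityMeasure P]
  {Y : ℕ → Ω → ℝ}

lemma ae_tendsto_sum_lagged_mul_div (hmeas : ∀ j, Measurable (Y j)) (hindep : iIndepFun Y P)
    (hident : ∀ j, IdentDistrib (Y j) (Y 0) P P) (hbound : ∀ j ω, |Y j ω| ≤ 1)
    (hmean : P[Y 0] = 0) {k : ℕ} (hk : 0 < k) (r : ℕ) :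
    ∀ᵐ ω ∂P, Tendsto (fun M : ℕ =>
      (∑ t ∈ range M, Y (2 * k * t + r + k) ω * Y (2 * k * t + r) ω) / M) atTop (nhds 0) := by
  set T : ℕ → Ω → ℝ := fun t => Y (2 * k * t + r + k) * Y (2 * k * t + r)
  have hsep : ∀ t s, t < s → 2 * k * t + 2 * k ≤ 2 * k * s := fun t s h => by
    nlinarith [Nat.mul_le_mul_left (2 * k) (Nat.succ_le_of_lt h)]
  have hTindep : Pairwise fun t s => IndepFun (T t) (T s) P := fun t s hts => by
    rcases lt_or_gt_of_ne hts with h | h <;> have := hsep _ _ h <;>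
      exact hindep.indepFun_mul_mul hmeas _ _ _ _ (by omega) (by omega) (by omega) (by omega)
  have hident' : ∀ i j, IdentDistrib (Y i) (Y j) P P := fun i j => (hident i).trans (hident j).symm
  have hTident : ∀ t, IdentDistrib (T t) (T 0) P P := fun t =>
    ((hident' _ _).prodMk (hident' _ _) (hindep.indepFun (by omega))
      (hindep.indepFun (by omega))).comp measurable_mul
  have hTint : Integrable (T 0) P :=
    .of_bound ((hmeas _).mul (hmeas _)).aestronglyMeasurable 1 <| .of_forall fun ω => by
      rw [Real.norm_eq_abs, show T 0 ω = Y _ ω * Y _ ω from rfl, abs_mul]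
      exact mul_le_one₀ (hbound _ ω) (abs_nonneg _) (hbound _ ω)
  have hTmean : P[T 0] = 0 := by
    rw [(hindep.indepFun (by omega)).integral_mul_eq_mul_integral (hmeas _).aestronglyMeasurable
      (hmeas _).aestronglyMeasurable, (hident _).integral_eq, hmean, zero_mul]
  have hslln := strong_law_ae_real T hTint hTindep hTident
  rw [hTmean] at hslln
  simpa [T] using hslln

theorem ae_tendsto_autocorrelation (hmeas : ∀ j, Measurable (Y j)) (hindep : iIndepFun Y P)
    (hident : ∀ j, IdentDistrib (Y j) (Y 0) P P) (hbound : ∀ j ω, |Y j ω| ≤ 1)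
    (hmean : P[Y 0] = 0) :
    ∀ᵐ ω ∂P, ∀ k, 0 < k →
      Tendsto (fun M : ℕ => (∑ m ∈ range M, Y (m + k) ω * Y m ω) / M) atTop (nhds 0) := by
  refine ae_all_iff.2 fun k => ?_
  rcases k.eq_zero_or_pos with rfl | hk
  · exact .of_forall fun _ h => absurd h (lt_irrefl 0)
  filter_upwards [ae_all_iff.2
    (ae_tendsto_sum_lagged_mul_div hmeas hindep hident hbound hmean hk)] with ω hω _
  refine tendsto_sum_div_of_residues (fun m => ?_) (by omega : 0 < 2 * k) fun r _ => hω r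
  rw [abs_mul]
  exact mul_le_one₀ (hbound _ ω) (abs_nonneg _) (hbound _ ω)

end Autocorrelation

section FairBits

variable {Ω : Type*} [MeasurableSpace Ω] {P : Measure Ω} {X : ℕ → Ω → ℕ}

lemma identDistrib_of_fair_bits (hXmeas : ∀ j, Measurable (X j))
    (hXval : ∀ j ω, X j ω = 0 ∨ X j ω = 1)
    (hXdist : ∀ j, P {ω | X j ω = 0} = 1 / 2 ∧ P {ω | X j ω = 1} = 1 / 2) (j : ℕ) :
    IdentDistrib (X j) (X 0) P P where
  aemeasurable_fst := (hXmeas j).aemeasurable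
  aemeasurable_snd := (hXmeas 0).aemeasurable
  map_eq := Measure.ext_of_singleton fun n => by
    rw [Measure.map_apply (hXmeas j) (measurableSet_singleton n),
      Measure.map_apply (hXmeas 0) (measurableSet_singleton n)]
    rcases n with _ | _ | n
    · exact (hXdist j).1.trans (hXdist 0).1.symm
    · exact (hXdist j).2.trans (hXdist 0).2.symm
    · have hempty : ∀ i, X i ⁻¹' {n + 2} = ∅ := fun i =>
        Set.eq_empty_of_forall_notMem fun ω hω => by
          rcases hXval i ω with h | h <;> simp [h] at hω
      rw [hempty, hempty]

lemma integral_fair_sign [IsProbabilityMeasure P] (hXmeas : ∀ j, Measurable (X j))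
    (hXval : ∀ j ω, X j ω = 0 ∨ X j ω = 1)
    (hXdist : ∀ j, P {ω | X j ω = 0} = 1 / 2 ∧ P {ω | X j ω = 1} = 1 / 2) (j : ℕ) :
    ∫ ω, (2 * (X j ω : ℝ) - 1) ∂P = 0 := by
  have hs : MeasurableSet {ω | X j ω = 1} := hXmeas j (measurableSet_singleton 1)
  calc ∫ ω, (2 * (X j ω : ℝ) - 1) ∂P
      = ∫ ω, ({ω | X j ω = 1}.indicator (fun _ => (2 : ℝ)) ω - 1) ∂P :=
        integral_congr_ae <| .of_forall fun ω => by
          rcases hXval j ω with h | h <;> simp [h]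
    _ = 0 := by
      rw [integral_sub ((integrable_const _).indicator hs) (integrable_const _),
        integral_indicator_const _ hs, measureReal_def, (hXdist j).2]
      norm_num

end FairBits

theorem generic_variance (μ : ℕ → ℤ → ℝ)
    (hμ : ∀ a d, Tendsto (densSeq a d) atTop (nhds (μ a d)))
    (Ω : Type*) [MeasurableSpace Ω] (P : Measure Ω) [IsProbabilityMeasure P]
    (X : ℕ → Ω → ℕ) (hXmeas : ∀ j, Measurable (X j))
    (hXindep : iIndepFun X P)
    (hXval : ∀ j ω, X j ω = 0 ∨ X j ω = 1)
    (hXdist : ∀ j, P {ω | X j ω = 0} = 1 / 2 ∧ P {ω | X j ω = 1} = 1 / 2)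
    (aX : Ω → ℕ → ℕ) (haX : ∀ ω n, aX ω n = ∑ k ∈ range (n + 1), X k ω * 2 ^ k) :
    ∀ᵐ ω ∂P,
      Tendsto (fun n : ℕ => var μ (aX ω n) / n) atTop (nhds (1 / 2)) := by
  have hμ' := isDigitDensity_of_tendsto hμ
  have hsign : Measurable fun n : ℕ => 2 * (n : ℝ) - 1 := measurable_from_nat
  have hcorr := ae_tendsto_autocorrelation (Y := fun j ω => 2 * (X j ω : ℝ) - 1)
    (fun j => hsign.comp (hXmeas j)) (hXindep.comp _ fun _ => hsign)
    (fun j => (identDistrib_of_fair_bits hXmeas hXval hXdist j).comp hsign)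
    (fun j ω => by rcases hXval j ω with h | h <;> norm_num [h])
    (integral_fair_sign hXmeas hXval hXdist 0)
  filter_upwards [hcorr] with ω hω
  simp only [haX]
  exact tendsto_succ_div (tendsto_apply_sum_digits_div hμ'.var_zero hμ'.var_two_mul
    hμ'.var_two_mul_add_one (hXval · ω) hω)
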